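/- For every s ∈ ℝ and t > 0, t / (π(t²+s²)) = ∫₀^∞ (exp(−s²/(2w))/√(2πw)) · (t·exp(−t²/(2w))/√(2πw³)) dw. -/

import Mathlib

/-!
Both densities are `1/√w` and `1/√(w³)` times Gaussian exponentials in `1/w`, so their product is
`t/(2π) · w⁻² · exp(-(t² + s²)/(2w))`. The substitution `w ↦ 1/w` turns `w⁻² dw` into `dy` and
leaves the elementary integral `∫₀^∞ exp(-c y) dy = 1/c` with `c = (t² + s²)/2`.
-/

open Real MeasureTheory Set

lemma integral_inv_sq_smul_comp_inv_Ioi {E : Type*} [NormedAddCommGroup E] [NormedSpace ℝ E]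
    (g : ℝ → E) : ∫ w in Ioi (0 : ℝ), (w ^ 2)⁻¹ • g w⁻¹ = ∫ y in Ioi (0 : ℝ), g y := by
  rw [← integral_comp_rpow_Ioi g (p := -1) (by norm_num)]
  refine setIntegral_congr_fun measurableSet_Ioi fun w (hw : 0 < w) => ?_
  have hpow : w ^ ((-1 : ℝ) - 1) = (w ^ 2)⁻¹ := by
    rw [show (-1 : ℝ) - 1 = -(2 : ℕ) by norm_num, rpow_neg hw.le, rpow_natCast]
  rw [hpow, rpow_neg_one, abs_neg, abs_one, one_mul]

lemma integral_exp_neg_mul_Ioi {c : ℝ} (hc : 0 < c) :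
    ∫ y in Ioi (0 : ℝ), exp (-c * y) = c⁻¹ := by
  rw [integral_exp_mul_Ioi (neg_lt_zero.mpr hc)]
  simp

lemma integral_inv_sq_mul_exp_neg_div_Ioi {c : ℝ} (hc : 0 < c) :
    ∫ w in Ioi (0 : ℝ), (w ^ 2)⁻¹ * exp (-c / w) = c⁻¹ := by
  simpa [div_eq_mul_inv] using
    (integral_inv_sq_smul_comp_inv_Ioi fun y => exp (-c * y)).trans (integral_exp_neg_mul_Ioi hc)

lemma gaussian_mul_firstPassage_eq (s t : ℝ) {w : ℝ} (hw : 0 < w) :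
    exp (-s ^ 2 / (2 * w)) / √(2 * π * w) * (t * exp (-t ^ 2 / (2 * w)) / √(2 * π * w ^ 3))
      = t / (2 * π) * ((w ^ 2)⁻¹ * exp (-((t ^ 2 + s ^ 2) / 2) / w)) := by
  have hsqrt : √(2 * π * w) * √(2 * π * w ^ 3) = 2 * π * w ^ 2 := by
    rw [← sqrt_mul (by positivity), show 2 * π * w * (2 * π * w ^ 3) = (2 * π * w ^ 2) ^ 2 by ring,
      sqrt_sq (by positivity)]
  have hexp : exp (-s ^ 2 / (2 * w)) * exp (-t ^ 2 / (2 * w))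
      = exp (-((t ^ 2 + s ^ 2) / 2) / w) := by
    rw [← exp_add]; congr 1; field_simp; ring
  rw [div_mul_div_comm, hsqrt, mul_left_comm, hexp]
  field_simp

theorem cauchy_density_subordination (s t : ℝ) (ht : 0 < t) :
    t / (π * (t ^ 2 + s ^ 2))
      = ∫ w in Set.Ioi (0 : ℝ),
          (Real.exp (-s ^ 2 / (2 * w)) / Real.sqrt (2 * π * w)) *
            (t * Real.exp (-t ^ 2 / (2 * w)) / Real.sqrt (2 * π * w ^ 3)) := by
  rw [setIntegral_congr_fun measurableSet_Ioi fun w hw => gaussian_mul_firstPassage_eq s t hw,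
    integral_const_mul, integral_inv_sq_mul_exp_neg_div_Ioi (by positivity)]
  field_simp
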